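/- Define φ : ℝ → ℝ by φ(t) = t · log(2·t/(t+1)) + log(2/(t+1)) for t > 0, and define h(t) = (t−1)²/φ(t) for t > 0, t ≠ 1. Then h is strictly increasing where defined: for all real s, t with 0 < s < t, s ≠ 1 and t ≠ 1, one has h(s) < h(t). -/

import Mathlib

/-- The generator of the Jensen–Shannon-type divergence:
`φ(t) = t · log(2t/(t+1)) + log(2/(t+1))`. -/
noncomputable def jsGen (t : ℝ) : ℝ :=
  t * Real.log (2 * t / (t + 1)) + Real.log (2 / (t + 1))

/-- The ratio `h(t) = (t−1)²/φ(t)` of the chi-squared generator to the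
Jensen–Shannon generator. -/
noncomputable def hRatio (t : ℝ) : ℝ := (t - 1) ^ 2 / jsGen t

/-!
`φ` has `φ(1) = φ'(1) = 0` and `φ'' = 1/(t(t+1)) > 0`, so `φ > 0` off `1`. The derivative of
`h` is `(t - 1) G / φ²` with `G = 2φ - (t - 1)φ'`. Here `G(1) = 0` and `G' = φ' - (t - 1)φ''`
has a strict minimum `0` at `1`, its derivative being `-(t - 1)φ'''` with `φ''' < 0`; so `G`
has the sign of `t - 1` and `h` increases on `(0, 1)` and on `(1, ∞)`. The two branches are
separated by the value `4 = 2/φ''(1)` of the removable singularity: `(t - 1)² - 4φ` vanishes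
at `1` together with its derivative, and its second derivative `2 - 4φ''` has the sign of
`t - 1`, so it is negative on `(0, 1)` and positive on `(1, ∞)`.
-/

open Set Real

section MeanValue

variable {f f' : ℝ → ℝ} {a c : ℝ}

lemma strictMonoOn_of_hasDerivAt_pos {D : Set ℝ} (hD : Convex ℝ D)
    (hf : ∀ x ∈ D, HasDerivAt f (f' x) x) (hf' : ∀ x ∈ interior D, 0 < f' x) :
    StrictMonoOn f D :=
  strictMonoOn_of_deriv_pos hD (fun x hx ↦ (hf x hx).continuousAt.continuousWithinAt)
    fun x hx ↦ (hf x (interior_subset hx)).deriv ▸ hf' x hx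

lemma strictAntiOn_of_hasDerivAt_neg {D : Set ℝ} (hD : Convex ℝ D)
    (hf : ∀ x ∈ D, HasDerivAt f (f' x) x) (hf' : ∀ x ∈ interior D, f' x < 0) :
    StrictAntiOn f D :=
  strictAntiOn_of_deriv_neg hD (fun x hx ↦ (hf x hx).continuousAt.continuousWithinAt)
    fun x hx ↦ (hf x (interior_subset hx)).deriv ▸ hf' x hx

lemma strictMonoOn_Ioi_of_hasDerivAt_pos_of_ne (hc : a < c)
    (hf : ∀ x ∈ Ioi a, HasDerivAt f (f' x) x) (hf' : ∀ x ∈ Ioi a, x ≠ c → 0 < f' x) :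
    StrictMonoOn f (Ioi a) := by
  have hleft : StrictMonoOn f (Ioc a c) :=
    strictMonoOn_of_hasDerivAt_pos (convex_Ioc a c) (fun x hx ↦ hf x hx.1) fun x hx ↦ by
      rw [interior_Ioc] at hx; exact hf' x hx.1 hx.2.ne
  have hright : StrictMonoOn f (Ici c) :=
    strictMonoOn_of_hasDerivAt_pos (convex_Ici c) (fun x hx ↦ hf x (hc.trans_le hx))
      fun x hx ↦ by rw [interior_Ici] at hx; exact hf' x (hc.trans hx) hx.ne'
  simpa only [Ioc_union_Ici_eq_Ioi hc] using hleft.union hright (isGreatest_Ioc hc) isLeast_Ici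

lemma lt_of_hasDerivAt_sign_change (hc : a < c)
    (hf : ∀ x ∈ Ioi a, HasDerivAt f (f' x) x)
    (hf' : ∀ x ∈ Ioi a, x ≠ c → 0 < (x - c) * f' x) {x : ℝ} (hx : a < x) (hxc : x ≠ c) :
    f c < f x := by
  rcases hxc.lt_or_gt with hxc | hxc
  · refine strictAntiOn_of_hasDerivAt_neg (convex_Ioc a c) (fun y hy ↦ hf y hy.1)
      (fun y hy ↦ ?_) ⟨hx, hxc.le⟩ ⟨hc, le_rfl⟩ hxc
    rw [interior_Ioc] at hy
    exact neg_of_mul_pos_right (hf' y hy.1 hy.2.ne) (by linarith [hy.2])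
  · refine strictMonoOn_of_hasDerivAt_pos (convex_Ici c) (fun y hy ↦ hf y (hc.trans_le hy))
      (fun y hy ↦ ?_) (mem_Ici.2 le_rfl) hxc.le hxc
    rw [interior_Ici] at hy
    exact pos_of_mul_pos_right (hf' y (hc.trans hy) hy.ne') (by linarith [mem_Ioi.1 hy])

lemma StrictMonoOn.sub_mul_pos_of_eq_zero {g : ℝ → ℝ} {D : Set ℝ} {c x : ℝ}
    (hg : StrictMonoOn g D) (hc : c ∈ D) (hgc : g c = 0) (hx : x ∈ D) (hxc : x ≠ c) :
    0 < (x - c) * g x := by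
  rcases hxc.lt_or_gt with hxc | hxc
  · exact mul_pos_of_neg_of_neg (by linarith) (hgc ▸ hg hx hc hxc)
  · exact mul_pos (by linarith) (hgc ▸ hg hc hx hxc)

end MeanValue

noncomputable def jsGenDeriv (t : ℝ) : ℝ := log (2 * t / (t + 1))

lemma jsGen_one : jsGen 1 = 0 := by norm_num [jsGen]

lemma jsGenDeriv_one : jsGenDeriv 1 = 0 := by norm_num [jsGenDeriv]

lemma hasDerivAt_jsGenDeriv {t : ℝ} (ht : 0 < t) :
    HasDerivAt jsGenDeriv (1 / (t * (t + 1))) t := by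
  unfold jsGenDeriv
  have hq : HasDerivAt (fun x ↦ 2 * x / (x + 1)) ((2 * (t + 1) - 2 * t) / (t + 1) ^ 2) t := by
    simpa using ((hasDerivAt_id t).const_mul 2).fun_div ((hasDerivAt_id t).add_const 1)
      (by positivity)
  convert hq.log (by positivity) using 1
  field_simp
  ring

lemma hasDerivAt_jsGen {t : ℝ} (ht : 0 < t) : HasDerivAt jsGen (jsGenDeriv t) t := by
  have hr : HasDerivAt (fun x ↦ 2 / (x + 1)) (-2 / (t + 1) ^ 2) t := by
    simpa using (hasDerivAt_const t (2 : ℝ)).fun_div ((hasDerivAt_id t).add_const 1)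
      (by positivity)
  have h := ((hasDerivAt_id' t).fun_mul (hasDerivAt_jsGenDeriv ht)).fun_add
    (hr.log (by positivity))
  exact h.congr_deriv (by field_simp; ring)

lemma strictMonoOn_jsGenDeriv : StrictMonoOn jsGenDeriv (Ioi 0) :=
  strictMonoOn_of_hasDerivAt_pos (convex_Ioi 0) (fun _ hx ↦ hasDerivAt_jsGenDeriv hx)
    fun x hx ↦ by rw [interior_Ioi] at hx; have : (0 : ℝ) < x := hx; positivity

lemma jsGen_pos {t : ℝ} (ht : 0 < t) (ht1 : t ≠ 1) : 0 < jsGen t :=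
  jsGen_one ▸ lt_of_hasDerivAt_sign_change one_pos (fun _ hx ↦ hasDerivAt_jsGen hx)
    (fun _ hx hx1 ↦ strictMonoOn_jsGenDeriv.sub_mul_pos_of_eq_zero (mem_Ioi.2 one_pos)
      jsGenDeriv_one hx hx1) ht ht1

lemma sub_div_lt_jsGenDeriv {t : ℝ} (ht : 0 < t) (ht1 : t ≠ 1) :
    (t - 1) / (t * (t + 1)) < jsGenDeriv t := by
  have hderiv : ∀ x ∈ Ioi (0 : ℝ),
      HasDerivAt (fun x ↦ jsGenDeriv x - (x - 1) / (x * (x + 1)))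
      ((x - 1) * (2 * x + 1) / (x * (x + 1)) ^ 2) x := by
    intro x hx
    have hx : 0 < x := hx
    have hq := ((hasDerivAt_id' x).sub_const 1).fun_div
      ((hasDerivAt_id' x).fun_mul ((hasDerivAt_id' x).add_const 1)) (by positivity)
    exact ((hasDerivAt_jsGenDeriv hx).sub hq).congr_deriv (by field_simp; ring)
  have := lt_of_hasDerivAt_sign_change one_pos hderiv (fun x hx hx1 ↦ by
    have hx : 0 < x := hx
    have : 0 < (x - 1) ^ 2 := by positivity
    rw [show (x - 1) * ((x - 1) * (2 * x + 1) / (x * (x + 1)) ^ 2)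
      = (x - 1) ^ 2 * (2 * x + 1) / (x * (x + 1)) ^ 2 by ring]
    positivity) ht ht1
  norm_num [jsGenDeriv_one] at this
  linarith

noncomputable def hRatioDerivNum (t : ℝ) : ℝ := 2 * jsGen t - (t - 1) * jsGenDeriv t

lemma hRatioDerivNum_one : hRatioDerivNum 1 = 0 := by
  simp [hRatioDerivNum, jsGen_one, jsGenDeriv_one]

lemma hasDerivAt_hRatio {t : ℝ} (ht : 0 < t) (ht1 : t ≠ 1) :
    HasDerivAt hRatio ((t - 1) * hRatioDerivNum t / jsGen t ^ 2) t := by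
  have hsq : HasDerivAt (fun x ↦ (x - 1) ^ 2) (2 * (t - 1)) t := by
    simpa using ((hasDerivAt_id' t).sub_const 1).fun_pow 2
  exact (hsq.fun_div (hasDerivAt_jsGen ht) (jsGen_pos ht ht1).ne').congr_deriv
    (by simp only [hRatioDerivNum]; ring)

lemma strictMonoOn_hRatioDerivNum : StrictMonoOn hRatioDerivNum (Ioi 0) := by
  refine strictMonoOn_Ioi_of_hasDerivAt_pos_of_ne one_pos (fun x hx ↦ ?_)
    fun x hx hx1 ↦ sub_pos.2 (sub_div_lt_jsGenDeriv hx hx1)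
  have hx : 0 < x := hx
  exact (((hasDerivAt_jsGen hx).const_mul 2).sub
    (((hasDerivAt_id' x).sub_const 1).mul (hasDerivAt_jsGenDeriv hx))).congr_deriv
    (by field_simp; ring)

lemma hRatio_strictMonoOn {D : Set ℝ} (hD : Convex ℝ D) (hD0 : D ⊆ Ioi 0) (hD1 : 1 ∉ D) :
    StrictMonoOn hRatio D := by
  refine strictMonoOn_of_hasDerivAt_pos hD
    (fun x hx ↦ hasDerivAt_hRatio (hD0 hx) (ne_of_mem_of_not_mem hx hD1)) fun x hx ↦ ?_
  have hx := interior_subset hx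
  have hx0 : 0 < x := hD0 hx
  have hx1 : x ≠ 1 := ne_of_mem_of_not_mem hx hD1
  have := strictMonoOn_hRatioDerivNum.sub_mul_pos_of_eq_zero (mem_Ioi.2 one_pos)
    hRatioDerivNum_one hx0 hx1
  have := jsGen_pos hx0 hx1
  positivity

lemma strictMonoOn_sq_sub_four_mul_jsGen :
    StrictMonoOn (fun t ↦ (t - 1) ^ 2 - 4 * jsGen t) (Ioi 0) := by
  have hd : ∀ x ∈ Ioi (0 : ℝ), HasDerivAt (fun t ↦ (t - 1) ^ 2 - 4 * jsGen t)
      (2 * (x - 1) - 4 * jsGenDeriv x) x := fun x hx ↦ by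
    simpa using (((hasDerivAt_id' x).sub_const 1).fun_pow 2).fun_sub
      ((hasDerivAt_jsGen hx).const_mul 4)
  have hdd : ∀ x ∈ Ioi (0 : ℝ), HasDerivAt (fun t ↦ 2 * (t - 1) - 4 * jsGenDeriv t)
      (2 * (x - 1) * (x + 2) / (x * (x + 1))) x := fun x hx ↦ by
    have hx : 0 < x := hx
    exact ((((hasDerivAt_id' x).sub_const 1).const_mul 2).sub
      ((hasDerivAt_jsGenDeriv hx).const_mul 4)).congr_deriv (by field_simp; ring)
  refine strictMonoOn_Ioi_of_hasDerivAt_pos_of_ne one_pos hd fun x hx hx1 ↦ ?_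
  have := lt_of_hasDerivAt_sign_change one_pos hdd (fun y hy hy1 ↦ by
    have hy : 0 < y := hy
    have : 0 < (y - 1) ^ 2 := by positivity
    rw [show (y - 1) * (2 * (y - 1) * (y + 2) / (y * (y + 1)))
      = 2 * (y - 1) ^ 2 * (y + 2) / (y * (y + 1)) by ring]
    positivity) hx hx1
  simpa [jsGenDeriv_one] using this

lemma hRatio_lt_four {s : ℝ} (hs : 0 < s) (hs1 : s < 1) : hRatio s < 4 := by
  have := strictMonoOn_sq_sub_four_mul_jsGen hs (mem_Ioi.2 one_pos) hs1
  norm_num [jsGen_one] at this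
  rw [hRatio, div_lt_iff₀ (jsGen_pos hs hs1.ne)]
  linarith

lemma four_lt_hRatio {t : ℝ} (ht : 1 < t) : 4 < hRatio t := by
  have ht0 : 0 < t := one_pos.trans ht
  have := strictMonoOn_sq_sub_four_mul_jsGen (mem_Ioi.2 one_pos) ht0 ht
  norm_num [jsGen_one] at this
  rw [hRatio, lt_div_iff₀ (jsGen_pos ht0 ht.ne')]
  linarith

/-- `h` is strictly increasing where it is defined: for `0 < s < t` with
`s ≠ 1` and `t ≠ 1`, `h(s) < h(t)`. -/
theorem hRatio_strictMono :
    ∀ s t : ℝ, 0 < s → s < t → s ≠ 1 → t ≠ 1 → hRatio s < hRatio t := by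
  intro s t hs hst hs1 ht1
  rcases hs1.lt_or_gt with hs1 | hs1 <;> rcases ht1.lt_or_gt with ht1 | ht1
  · exact hRatio_strictMonoOn (convex_Ioo 0 1) Ioo_subset_Ioi_self (fun h ↦ h.2.false)
      ⟨hs, hs1⟩ ⟨hs.trans hst, ht1⟩ hst
  · exact (hRatio_lt_four hs hs1).trans (four_lt_hRatio ht1)
  · linarith
  · exact hRatio_strictMonoOn (convex_Ioi 1) (Ioi_subset_Ioi zero_le_one) (lt_irrefl (1 : ℝ))
      hs1 (hs1.trans hst) hst
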